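/- arXiv:2602.08464 — 2 statements merged into one kernel-verified Lean document; each statement's English description precedes it below -/
import Mathlib

section
/- Pauli twirling eliminates the off-diagonal transfer-matrix elements while preserving the Pauli eigenvalues: for any linear map E on 2^n×2^n complex matrices, and its Pauli twirl E^P(ρ) = 4^{-n} Σ_{a ∈ V} P_a · E(P_a ρ P_a) · P_a, one has trace(P_c · E^P(P_b)) = 0 whenever b ≠ c, and trace(P_b · E^P(P_b)) = trace(P_b · E(P_b)) for every b ∈ V. -/
/-- Index set of `n`-qubit Pauli words. -/
abbrev V (n : ℕ) : Type := (Fin n → ZMod 2) × (Fin n → ZMod 2)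

/-- Symplectic inner product `⟨a,b⟩ = Σᵢ (aₓᵢ·b_zᵢ + a_zᵢ·bₓᵢ) ∈ ZMod 2`. -/
def sform {n : ℕ} (a b : V n) : ZMod 2 := ∑ i, (a.1 i * b.2 i + a.2 i * b.1 i)

/-- The sign `χ(a,b) = (−1)^⟨a,b⟩ ∈ ℝ`. -/
noncomputable def chi {n : ℕ} (a b : V n) : ℝ := (-1 : ℝ) ^ (sform a b).val

/-- Integer (real-valued) lift `⟨a,b⟩_ℤ ∈ {0,1} ⊂ ℝ`. -/
noncomputable def sformZ {n : ℕ} (a b : V n) : ℝ := ((sform a b).val : ℝ)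

/-- The single-qubit Pauli factor `i^(aₓ·a_z) · X^(aₓ) · Z^(a_z)`. -/
noncomputable def pauli1 (ax az : ZMod 2) : Matrix (Fin 2) (Fin 2) ℂ :=
  (Complex.I ^ (ax.val * az.val)) •
    ((!![0, 1; 1, 0] : Matrix (Fin 2) (Fin 2) ℂ) ^ ax.val *
     (!![1, 0; 0, -1] : Matrix (Fin 2) (Fin 2) ℂ) ^ az.val)

/-- The space of `2^n × 2^n` complex matrices (indexed by `Fin n → Fin 2`). -/
abbrev Mq (n : ℕ) : Type := Matrix (Fin n → Fin 2) (Fin n → Fin 2) ℂ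

/-- The `n`-qubit Pauli word `P_a`, the Kronecker product over `i ∈ Fin n`
of `i^(aₓᵢ·a_zᵢ)·X^(aₓᵢ)·Z^(a_zᵢ)`. -/
noncomputable def P {n : ℕ} (a : V n) : Mq n :=
  Matrix.of fun x y => ∏ i, pauli1 (a.1 i) (a.2 i) (x i) (y i)


noncomputable def chiC (z : ZMod 2) : ℂ := (-1 : ℂ) ^ z.val

lemma zmod2_cases (x : ZMod 2) : x = 0 ∨ x = 1 := by revert x; decide

lemma v0 : (0 : ZMod 2).val = 0 := rfl
lemma v1 : (1 : ZMod 2).val = 1 := rfl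
lemma a11 : (1 + 1 : ZMod 2) = 0 := rfl

lemma chiC_zero : chiC 0 = 1 := by simp [chiC, v0]
lemma chiC_one : chiC 1 = -1 := by simp [chiC, v1]

lemma chiC_add (x y : ZMod 2) : chiC (x + y) = chiC x * chiC y := by
  rcases zmod2_cases x with h | h <;> rcases zmod2_cases y with h' | h' <;> subst h h' <;>
    simp [chiC, v0, v1, a11]

lemma chiC_sum {ι : Type*} (s : Finset ι) (f : ι → ZMod 2) :
    ∏ i ∈ s, chiC (f i) = chiC (∑ i ∈ s, f i) := by
  classical
  induction s using Finset.cons_induction with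
  | empty => simp [chiC_zero]
  | cons i s hi ih => rw [Finset.prod_cons, Finset.sum_cons, chiC_add, ih]

lemma pauli1_sq (ax az : ZMod 2) : pauli1 ax az * pauli1 ax az = 1 := by
  rcases zmod2_cases ax with h | h <;> rcases zmod2_cases az with h' | h' <;> subst h h' <;>
    · simp only [pauli1, v0, v1, a11, pow_zero, pow_one, Nat.mul_zero, Nat.zero_mul, Nat.mul_one,
        one_smul, Matrix.mul_one, Matrix.one_mul, Matrix.smul_mul, Matrix.mul_smul, smul_smul]
      try (ext i j; fin_cases i <;> fin_cases j <;> simp [Matrix.mul_apply, Fin.sum_univ_two, Matrix.one_apply, Complex.I_sq] <;> ring)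

lemma pauli1_comm (ax az bx bz : ZMod 2) :
    pauli1 ax az * pauli1 bx bz = chiC (ax*bz + az*bx) • (pauli1 bx bz * pauli1 ax az) := by
  rcases zmod2_cases ax with h | h <;> rcases zmod2_cases az with h' | h' <;>
  rcases zmod2_cases bx with h'' | h'' <;> rcases zmod2_cases bz with h''' | h''' <;>
    subst h h' h'' h''' <;>
    · simp only [pauli1, chiC, v0, v1, a11, mul_zero, mul_one, zero_mul, one_mul, add_zero,
        zero_add, pow_zero, pow_one, Nat.mul_zero, Nat.zero_mul, Nat.mul_one,
        one_smul, Matrix.mul_one, Matrix.one_mul, Matrix.smul_mul, Matrix.mul_smul, smul_smul]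
      try (ext i j; fin_cases i <;> fin_cases j <;> simp [Matrix.mul_apply, Fin.sum_univ_two, Matrix.one_apply, Complex.I_sq] <;> ring)

lemma P_mul_apply {n : ℕ} (a b : V n) (x y : Fin n → Fin 2) :
    (P a * P b) x y = ∏ i, (pauli1 (a.1 i) (a.2 i) * pauli1 (b.1 i) (b.2 i)) (x i) (y i) := by
  have h : ∀ i : Fin n, (pauli1 (a.1 i) (a.2 i) * pauli1 (b.1 i) (b.2 i)) (x i) (y i)
      = ∑ k : Fin 2, pauli1 (a.1 i) (a.2 i) (x i) k * pauli1 (b.1 i) (b.2 i) k (y i) :=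
    fun i => Matrix.mul_apply
  rw [Finset.prod_congr rfl fun i _ => h i, Finset.prod_univ_sum]
  simp [Matrix.mul_apply, P, Finset.prod_mul_distrib]

lemma P_sq {n : ℕ} (a : V n) : P a * P a = 1 := by
  ext x y
  rw [P_mul_apply]
  simp only [pauli1_sq, Matrix.one_apply]
  rw [Finset.prod_boole]
  simp [funext_iff, eq_comm]

lemma P_comm {n : ℕ} (a b : V n) : P a * P b = chiC (sform a b) • (P b * P a) := by
  ext x y
  rw [Matrix.smul_apply, P_mul_apply, P_mul_apply,
    Finset.prod_congr rfl fun i _ => by rw [pauli1_comm (a.1 i) (a.2 i) (b.1 i) (b.2 i)]]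
  simp only [Matrix.smul_apply, smul_eq_mul, Finset.prod_mul_distrib, chiC_sum]
  rfl

lemma P_conj {n : ℕ} (a b : V n) : P a * P b * P a = chiC (sform a b) • P b := by
  rw [P_comm a b, Matrix.smul_mul, mul_assoc, P_sq, mul_one]

lemma sform_add_right {n : ℕ} (a b c : V n) : sform a (b + c) = sform a b + sform a c := by
  simp only [sform, ← Finset.sum_add_distrib]
  exact Finset.sum_congr rfl fun i _ => by
    show a.1 i * (b.2 i + c.2 i) + a.2 i * (b.1 i + c.1 i) = _
    ring

lemma sform_add_left {n : ℕ} (a b c : V n) : sform (a + b) c = sform a c + sform b c := by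
  simp only [sform, ← Finset.sum_add_distrib]
  exact Finset.sum_congr rfl fun i _ => by
    show (a.1 i + b.1 i) * c.2 i + (a.2 i + b.2 i) * c.1 i = _
    ring

lemma addV_self {n : ℕ} (c : V n) : c + c = 0 := by
  have h2 : ∀ x : ZMod 2, x + x = 0 := by decide
  exact Prod.ext (funext fun i => h2 _) (funext fun i => h2 _)

lemma exists_sform_one {n : ℕ} (d : V n) (hd : d ≠ 0) : ∃ a : V n, sform a d = 1 := by
  have hone : ∀ x : ZMod 2, x ≠ 0 → x = 1 := by decide
  have : d.1 ≠ 0 ∨ d.2 ≠ 0 := by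
    by_contra h
    push_neg at h
    exact hd (Prod.ext h.1 h.2)
  rcases this with h | h
  · obtain ⟨j, hj⟩ := Function.ne_iff.mp h
    refine ⟨(0, Pi.single j 1), ?_⟩
    have : sform ((0, Pi.single j 1) : V n) d = d.1 j := by
      simp [sform, Pi.single_apply, ite_mul]
    rw [this, hone _ hj]
  · obtain ⟨j, hj⟩ := Function.ne_iff.mp h
    refine ⟨(Pi.single j 1, 0), ?_⟩
    have : sform ((Pi.single j 1, 0) : V n) d = d.2 j := by
      simp [sform, Pi.single_apply, ite_mul]
    rw [this, hone _ hj]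

lemma sum_chiC_eq_zero {n : ℕ} (d : V n) (hd : d ≠ 0) :
    ∑ a : V n, chiC (sform a d) = 0 := by
  obtain ⟨a₀, ha₀⟩ := exists_sform_one d hd
  have hb : Function.Bijective (fun a : V n => a₀ + a) := (Equiv.addLeft a₀).bijective
  have h1 : ∑ a : V n, chiC (sform (a₀ + a) d) = ∑ a : V n, chiC (sform a d) :=
    Fintype.sum_bijective _ hb _ _ fun a => rfl
  have h2 : ∀ a : V n, chiC (sform (a₀ + a) d) = - chiC (sform a d) := by
    intro a
    rw [sform_add_left, chiC_add, ha₀, chiC_one, neg_one_mul]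
  rw [Finset.sum_congr rfl fun a _ => h2 a, Finset.sum_neg_distrib] at h1
  exact add_self_eq_zero.mp (by linear_combination -h1)

lemma card_V {n : ℕ} : (Fintype.card (V n) : ℂ) = 4 ^ n := by
  simp only [Fintype.card_prod, Fintype.card_fun, ZMod.card, Fintype.card_fin]
  push_cast
  rw [show (4:ℂ) = 2 * 2 by norm_num, mul_pow]


theorem pauli_twirl_transfer_matrix (n : ℕ) (hn : 1 ≤ n)
    (E : Mq n →ₗ[ℂ] Mq n) (EP : Mq n → Mq n)
    (hEP : ∀ ρ : Mq n, EP ρ = ((4 : ℂ) ^ n)⁻¹ • (∑ a : V n, P a * E (P a * ρ * P a) * P a)) :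
    (∀ b c : V n, b ≠ c → Matrix.trace (P c * EP (P b)) = 0) ∧
    (∀ b : V n, Matrix.trace (P b * EP (P b)) = Matrix.trace (P b * E (P b))) := by
  have key : ∀ b c : V n, Matrix.trace (P c * EP (P b)) =
      ((4 : ℂ) ^ n)⁻¹ * (∑ a : V n, chiC (sform a (b + c))) * Matrix.trace (P c * E (P b)) := by
    intro b c
    rw [hEP, Matrix.mul_smul, Matrix.trace_smul, Matrix.mul_sum, Matrix.trace_sum]
    have hterm : ∀ a : V n, Matrix.trace (P c * (P a * E (P a * P b * P a) * P a))
        = chiC (sform a (b + c)) * Matrix.trace (P c * E (P b)) := by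
      intro a
      have hc : ∀ Q : Mq n, Matrix.trace (P c * (P a * (Q * P a)))
          = chiC (sform a c) * Matrix.trace (P c * Q) := by
        intro Q
        have e1 : P c * (P a * (Q * P a)) = P c * P a * Q * P a := by
          simp only [mul_assoc]
        rw [e1, Matrix.trace_mul_cycle]
        have e2 : P a * (P c * P a) * Q = P a * P c * P a * Q := by
          simp only [mul_assoc]
        rw [e2, P_conj a c, Matrix.smul_mul, Matrix.trace_smul, smul_eq_mul]
      rw [P_conj a b, map_smul]
      have e : P a * (chiC (sform a b) • E (P b)) * P a
          = chiC (sform a b) • (P a * (E (P b) * P a)) := by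
        rw [mul_smul_comm, Matrix.smul_mul, mul_assoc]
      rw [e, mul_smul_comm, Matrix.trace_smul, smul_eq_mul, hc (E (P b)),
        sform_add_right, chiC_add]
      ring
    rw [Finset.sum_congr rfl fun a _ => hterm a, ← Finset.sum_mul, smul_eq_mul]
    ring
  have h4 : ((4 : ℂ) ^ n) ≠ 0 := pow_ne_zero _ (by norm_num)
  constructor
  · intro b c hbc
    have hd : b + c ≠ 0 := by
      intro h
      apply hbc
      have h1 := congrArg (· + c) h
      simpa [add_assoc, addV_self] using h1
    rw [key, sum_chiC_eq_zero _ hd]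
    ring
  · intro b
    rw [key, addV_self]
    have : ∑ a : V n, chiC (sform a (0 : V n)) = 4 ^ n := by
      have hz : ∀ a : V n, sform a (0 : V n) = 0 := by
        intro a; simp [sform]
      rw [Finset.sum_congr rfl fun a _ => by rw [hz a, chiC_zero]]
      rw [Finset.sum_const, Finset.card_univ, nsmul_eq_mul, mul_one, card_V]
    rw [this, inv_mul_cancel₀ h4, one_mul]
end

section
/- Hadamard dephasing with relaxation: let γ_φ ≥ 0, γ ≥ 0, t ≥ 0. Let L_φ = (X + Z)/√2, let R = !![cos(π/8), −sin(π/8); sin(π/8), cos(π/8)] (the rotation R_y(π/4)), let L = R·σ₋·Rᵀ, and let D be the linear map on 2×2 complex matrices D(ρ) = γ_φ·(L_φ ρ L_φ − ρ) + γ·(L ρ L† − ½(L†L·ρ + ρ·L†L)). Then the Pauli eigenvalues of exp(t·D) satisfy f_x = f_z = ½(exp(−(γ/2 + 2γ_φ)t) + exp(−γt)) and f_y = exp(−(γ/2 + 2γ_φ)t), and the Pauli-Lindblad parameters of the Pauli-twirled channel satisfy λ_x = λ_z = γ_φ·t/2 + γ·t/8 and λ_y = γ·t/4 − ½·Real.log(Real.cosh(γ_φ·t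 − γ·t/4)). -/
attribute [local instance] Matrix.linftyOpNormedAddCommGroup Matrix.linftyOpNormedRing
  Matrix.linftyOpNormedAlgebra

/-- The space of 2×2 complex matrices. -/
abbrev M2 : Type := Matrix (Fin 2) (Fin 2) ℂ

def Xm : M2 := !![0, 1; 1, 0]
def Ym : M2 := !![0, -Complex.I; Complex.I, 0]
def Zm : M2 := !![1, 0; 0, -1]

/-- The Hadamard jump operator `L_φ = (X + Z)/√2`. -/
noncomputable def Lφ : M2 := ((Real.sqrt 2 : ℝ) : ℂ)⁻¹ • (Xm + Zm)

/-- The lowering operator `σ₋`. -/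
def σm : M2 := !![0, 1; 0, 0]

/-- The rotation `R_y(π/4)`. -/
noncomputable def Rrot : M2 :=
  !![((Real.cos (Real.pi / 8) : ℝ) : ℂ), -((Real.sin (Real.pi / 8) : ℝ) : ℂ);
     ((Real.sin (Real.pi / 8) : ℝ) : ℂ), ((Real.cos (Real.pi / 8) : ℝ) : ℂ)]

/-- The tilted relaxation jump operator `L = R·σ₋·Rᵀ`. -/
noncomputable def Lt : M2 := Rrot * σm * Rrot.transpose

/-- The algebra of linear maps on `M2` is a topological ring (instance found automatically in the
older library). -/
instance instIsTopologicalRingM2End : IsTopologicalRing (M2 →L[ℂ] M2) :=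
  @NonUnitalSeminormedRing.toIsTopologicalRing _
    (@ContinuousLinearMap.toNormedRing ℂ M2 _ _ _).toSeminormedRing.toNonUnitalSeminormedRing

/-! On the basis `Xm + Zm`, `Xm - Zm`, `Ym` the generator `D` is diagonal: conjugation by the
Hadamard jump `Lφ` fixes `Xm + Zm` and negates the other two, while the dissipator of the tilted
jump `Lt` has eigenvalues `-1, -1/2, -1/2` there. So `exp (t • D)` is diagonal too, with entries
`e^b, e^a, e^a` for `b = -γ t`, `a = -(γ/2 + 2γφ) t`. Since `Xm` and `Zm` are half the sum and half
the difference of `Xm + Zm` and `Xm - Zm`, `f_x = f_z = (e^a + e^b)/2`, and the formula for `λ_y`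
comes from `(e^a + e^b)/2 = e^((a+b)/2) cosh((b-a)/2)`. -/

open NormedSpace Matrix

local notation "√₂" => ((Real.sqrt 2 : ℝ) : ℂ)

theorem exp_apply_of_apply_eq_smul {𝕂 E : Type*} [RCLike 𝕂] [NormedAddCommGroup E]
    [NormedSpace 𝕂 E] [CompleteSpace E] {A : E →L[𝕂] E} {v : E} {c : 𝕂} (h : A v = c • v) :
    exp A v = exp c • v := by
  have hpow (n : ℕ) : (A ^ n) v = c ^ n • v := by
    induction n with
    | zero => simp
    | succ n ih => rw [pow_succ', mul_apply_eq_comp, ih, map_smul, h, smul_smul, pow_succ]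
  have hA := (exp_series_hasSum_exp' (𝕂 := 𝕂) A).mapL (ContinuousLinearMap.apply 𝕂 E v)
  have hc := (exp_series_hasSum_exp' (𝕂 := 𝕂) c).smul_const v
  simp only [ContinuousLinearMap.apply_apply, FunLike.coe_smul, Pi.smul_apply, hpow,
    smul_smul] at hA hc
  exact hA.unique hc

theorem exp_smul_apply_of_apply_eq_smul {E : Type*} [NormedAddCommGroup E] [NormedSpace ℂ E]
    [CompleteSpace E] {D : E →L[ℂ] E} {v : E} {a : ℝ} (t : ℝ) (h : D v = (a : ℂ) • v) :
    exp (t • D) v = (Real.exp (a * t) : ℂ) • v := by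
  have htD : (t • D) v = ((a * t : ℝ) : ℂ) • v := by
    rw [_root_.smul_apply, h, ← Complex.coe_smul, smul_smul]
    push_cast
    ring_nf
  rw [exp_apply_of_apply_eq_smul htD, ← Complex.exp_eq_exp_ℂ, Complex.ofReal_exp]

theorem Real.log_half_mul_exp_add_exp (a b : ℝ) :
    Real.log (1 / 2 * (Real.exp a + Real.exp b)) =
      (a + b) / 2 + Real.log (Real.cosh ((b - a) / 2)) := by
  have h : 1 / 2 * (Real.exp a + Real.exp b) =
      Real.exp ((a + b) / 2) * Real.cosh ((b - a) / 2) := by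
    have ha : Real.exp a = Real.exp ((a + b) / 2) * Real.exp (-((b - a) / 2)) := by
      rw [← Real.exp_add]; ring_nf
    have hb : Real.exp b = Real.exp ((a + b) / 2) * Real.exp ((b - a) / 2) := by
      rw [← Real.exp_add]; ring_nf
    rw [Real.cosh_eq, ha, hb]
    ring
  rw [h, Real.log_mul (Real.exp_pos _).ne' (Real.cosh_pos _).ne', Real.log_exp]

noncomputable def lindbladDissipator {n : Type*} [Fintype n] (L ρ : Matrix n n ℂ) :
    Matrix n n ℂ :=
  L * ρ * Lᴴ - (1 / 2 : ℂ) • (Lᴴ * L * ρ + ρ * (Lᴴ * L))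

lemma ofReal_sqrt_two_sq : √₂ ^ 2 = 2 := by
  norm_cast
  exact Real.sq_sqrt zero_le_two

lemma Lt_eq : Lt = !![-(√₂ / 4), 1 / 2 + √₂ / 4; -(1 / 2) + √₂ / 4, √₂ / 4] := by
  have h2 : 2 * (Real.pi / 8) = Real.pi / 4 := by ring
  have hcs : Real.cos (Real.pi / 8) * Real.sin (Real.pi / 8) = √2 / 4 := by
    have := Real.sin_two_mul (Real.pi / 8)
    rw [h2, Real.sin_pi_div_four] at this
    linarith
  have hc : Real.cos (Real.pi / 8) ^ 2 = 1 / 2 + √2 / 4 := by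
    rw [Real.cos_sq, h2, Real.cos_pi_div_four]; ring
  have hs : Real.sin (Real.pi / 8) ^ 2 = 1 / 2 - √2 / 4 := by
    rw [Real.sin_sq, hc]; ring
  rw [Lt, Rrot]
  generalize Real.cos (Real.pi / 8) = c at hcs hc
  generalize Real.sin (Real.pi / 8) = s at hcs hs
  replace hcs : (c : ℂ) * s = √₂ / 4 := by exact_mod_cast hcs
  replace hc : (c : ℂ) ^ 2 = 1 / 2 + √₂ / 4 := by simpa using congrArg Complex.ofReal hc
  replace hs : (s : ℂ) ^ 2 = 1 / 2 - √₂ / 4 := by simpa using congrArg Complex.ofReal hs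
  ext i j
  fin_cases i <;> fin_cases j <;> simp [σm, Matrix.mul_apply, Fin.sum_univ_two]
  · linear_combination hcs
  · linear_combination hc
  · linear_combination -hs
  · linear_combination hcs

lemma Lφ_mul_mul_Lφ (V : M2) : Lφ * V * Lφ = (1 / 2 : ℂ) • ((Xm + Zm) * V * (Xm + Zm)) := by
  rw [Lφ, Matrix.smul_mul, Matrix.smul_mul, Matrix.mul_smul, smul_smul, ← mul_inv, ← sq,
    ofReal_sqrt_two_sq, one_div]

lemma Lφ_mul_Xm_add_Zm_mul_Lφ : Lφ * (Xm + Zm) * Lφ = Xm + Zm := by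
  rw [Lφ_mul_mul_Lφ]
  ext i j; fin_cases i <;> fin_cases j <;> simp [Xm, Zm] <;> norm_num

lemma Lφ_mul_Xm_sub_Zm_mul_Lφ : Lφ * (Xm - Zm) * Lφ = -(Xm - Zm) := by
  rw [Lφ_mul_mul_Lφ]
  ext i j; fin_cases i <;> fin_cases j <;> simp [Xm, Zm] <;> norm_num

lemma Lφ_mul_Ym_mul_Lφ : Lφ * Ym * Lφ = -Ym := by
  rw [Lφ_mul_mul_Lφ]
  ext i j; fin_cases i <;> fin_cases j <;> simp [Xm, Ym, Zm] <;> ring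

lemma Lt_conjTranspose_eq : Ltᴴ = !![-(√₂ / 4), -(1 / 2) + √₂ / 4; 1 / 2 + √₂ / 4, √₂ / 4] := by
  rw [Lt_eq]
  ext i j; fin_cases i <;> fin_cases j <;> simp [Matrix.conjTranspose_apply]

lemma lindbladDissipator_Lt_Xm_add_Zm : lindbladDissipator Lt (Xm + Zm) = -(Xm + Zm) := by
  rw [lindbladDissipator, Lt_conjTranspose_eq, Lt_eq]
  ext i j; fin_cases i <;> fin_cases j <;> simp [Xm, Zm] <;> grind [ofReal_sqrt_two_sq]

lemma lindbladDissipator_Lt_Xm_sub_Zm :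
    lindbladDissipator Lt (Xm - Zm) = (-(1 / 2) : ℂ) • (Xm - Zm) := by
  rw [lindbladDissipator, Lt_conjTranspose_eq, Lt_eq]
  ext i j; fin_cases i <;> fin_cases j <;> simp [Xm, Zm] <;> grind [ofReal_sqrt_two_sq]

lemma lindbladDissipator_Lt_Ym : lindbladDissipator Lt Ym = (-(1 / 2) : ℂ) • Ym := by
  rw [lindbladDissipator, Lt_conjTranspose_eq, Lt_eq]
  ext i j; fin_cases i <;> fin_cases j <;> simp [Ym] <;> grind [ofReal_sqrt_two_sq]

section PauliEigenvalues

variable {F : Type*} [FunLike F M2 M2] (Φ : F) {a b : ℂ}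

theorem half_trace_Xm_mul_apply_Xm [LinearMapClass F ℂ M2 M2]
    (hminus : Φ (Xm - Zm) = a • (Xm - Zm)) (hplus : Φ (Xm + Zm) = b • (Xm + Zm)) :
    1 / 2 * trace (Xm * Φ Xm) = 1 / 2 * (a + b) := by
  have hX : Φ Xm = (1 / 2 : ℂ) • (a • (Xm - Zm) + b • (Xm + Zm)) := by
    rw [← hminus, ← hplus, ← map_add, ← map_smul]
    congr 1
    module
  rw [hX]
  simp [Xm, Zm, Matrix.trace_fin_two]
  ring

theorem half_trace_Zm_mul_apply_Zm [LinearMapClass F ℂ M2 M2]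
    (hminus : Φ (Xm - Zm) = a • (Xm - Zm)) (hplus : Φ (Xm + Zm) = b • (Xm + Zm)) :
    1 / 2 * trace (Zm * Φ Zm) = 1 / 2 * (a + b) := by
  have hZ : Φ Zm = (1 / 2 : ℂ) • (b • (Xm + Zm) - a • (Xm - Zm)) := by
    rw [← hminus, ← hplus, ← map_sub, ← map_smul]
    congr 1
    module
  rw [hZ]
  simp [Xm, Zm, Matrix.trace_fin_two]
  ring

theorem half_trace_Ym_mul_apply_Ym (h : Φ Ym = a • Ym) : 1 / 2 * trace (Ym * Φ Ym) = a := by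
  rw [h]
  simp [Ym, Matrix.trace_fin_two]
  linear_combination (-a) * Complex.I_sq

end PauliEigenvalues

theorem hadamard_dephasing_and_relaxation_general (γφ γ t : ℝ)
    (D : M2 →L[ℂ] M2)
    (hD : ∀ ρ : M2, D ρ = (γφ : ℂ) • (Lφ * ρ * Lφ - ρ)
        + (γ : ℂ) • (Lt * ρ * Lt.conjTranspose
            - (1 / 2 : ℂ) • (Lt.conjTranspose * Lt * ρ + ρ * (Lt.conjTranspose * Lt))))
    (fx fy fz : ℝ)
    (hfx : (fx : ℂ) = (1 / 2 : ℂ) * Matrix.trace (Xm * NormedSpace.exp (t • D) Xm))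
    (hfy : (fy : ℂ) = (1 / 2 : ℂ) * Matrix.trace (Ym * NormedSpace.exp (t • D) Ym))
    (hfz : (fz : ℂ) = (1 / 2 : ℂ) * Matrix.trace (Zm * NormedSpace.exp (t • D) Zm)) :
    fx = (1 / 2 : ℝ) * (Real.exp (-(γ / 2 + 2 * γφ) * t) + Real.exp (-γ * t)) ∧
    fz = (1 / 2 : ℝ) * (Real.exp (-(γ / 2 + 2 * γφ) * t) + Real.exp (-γ * t)) ∧
    fy = Real.exp (-(γ / 2 + 2 * γφ) * t) ∧
    (1 / 4 : ℝ) * (Real.log fx - Real.log fy - Real.log fz) = γφ * t / 2 + γ * t / 8 ∧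
    (1 / 4 : ℝ) * (-Real.log fx - Real.log fy + Real.log fz) = γφ * t / 2 + γ * t / 8 ∧
    (1 / 4 : ℝ) * (-Real.log fx + Real.log fy - Real.log fz)
      = γ * t / 4 - (1 / 2 : ℝ) * Real.log (Real.cosh (γφ * t - γ * t / 4)) := by
  replace hD : ∀ ρ, D ρ = (γφ : ℂ) • (Lφ * ρ * Lφ - ρ) + (γ : ℂ) • lindbladDissipator Lt ρ := hD
  have hQ : D (Xm - Zm) = ((-(γ / 2 + 2 * γφ) : ℝ) : ℂ) • (Xm - Zm) := by
    rw [hD, Lφ_mul_Xm_sub_Zm_mul_Lφ, lindbladDissipator_Lt_Xm_sub_Zm]; push_cast; module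
  have hP : D (Xm + Zm) = ((-γ : ℝ) : ℂ) • (Xm + Zm) := by
    rw [hD, Lφ_mul_Xm_add_Zm_mul_Lφ, lindbladDissipator_Lt_Xm_add_Zm]; push_cast; module
  have hY : D Ym = ((-(γ / 2 + 2 * γφ) : ℝ) : ℂ) • Ym := by
    rw [hD, Lφ_mul_Ym_mul_Lφ, lindbladDissipator_Lt_Ym]; push_cast; module
  have eQ := exp_smul_apply_of_apply_eq_smul t hQ
  have eP := exp_smul_apply_of_apply_eq_smul t hP
  have eY := exp_smul_apply_of_apply_eq_smul t hY
  -- `rw [hfx]` would fail: the `exp (t • D)` of the statement and that of `eQ`, `eP` are taken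
  -- for two topologies on `M2` that agree only up to unfolding.
  have hx : fx = 1 / 2 * (Real.exp (-(γ / 2 + 2 * γφ) * t) + Real.exp (-γ * t)) := by
    refine Complex.ofReal_injective ((hfx.trans (half_trace_Xm_mul_apply_Xm _ eQ eP)).trans ?_)
    push_cast
    ring
  have hz : fz = 1 / 2 * (Real.exp (-(γ / 2 + 2 * γφ) * t) + Real.exp (-γ * t)) := by
    refine Complex.ofReal_injective ((hfz.trans (half_trace_Zm_mul_apply_Zm _ eQ eP)).trans ?_)
    push_cast
    ring
  have hy : fy = Real.exp (-(γ / 2 + 2 * γφ) * t) := by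
    exact_mod_cast hfy.trans (half_trace_Ym_mul_apply_Ym _ eY)
  have hcosh : Real.log fx =
      (-(γ / 2 + 2 * γφ) * t + -γ * t) / 2 + Real.log (Real.cosh (γφ * t - γ * t / 4)) := by
    rw [hx, Real.log_half_mul_exp_add_exp,
      show (-γ * t - -(γ / 2 + 2 * γφ) * t) / 2 = γφ * t - γ * t / 4 by ring]
  have hzx : fz = fx := hz.trans hx.symm
  refine ⟨hx, hz, hy, ?_, ?_, ?_⟩ <;> rw [hzx, hcosh, hy, Real.log_exp] <;> ring

theorem hadamard_dephasing_and_relaxation (γφ γ t : ℝ)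
    (hγφ : 0 ≤ γφ) (hγ : 0 ≤ γ) (ht : 0 ≤ t)
    (D : M2 →L[ℂ] M2)
    (hD : ∀ ρ : M2, D ρ = (γφ : ℂ) • (Lφ * ρ * Lφ - ρ)
        + (γ : ℂ) • (Lt * ρ * Lt.conjTranspose
            - (1 / 2 : ℂ) • (Lt.conjTranspose * Lt * ρ + ρ * (Lt.conjTranspose * Lt))))
    (fx fy fz : ℝ)
    (hfx : (fx : ℂ) = (1 / 2 : ℂ) * Matrix.trace (Xm * NormedSpace.exp (t • D) Xm))
    (hfy : (fy : ℂ) = (1 / 2 : ℂ) * Matrix.trace (Ym * NormedSpace.exp (t • D) Ym))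
    (hfz : (fz : ℂ) = (1 / 2 : ℂ) * Matrix.trace (Zm * NormedSpace.exp (t • D) Zm)) :
    fx = (1 / 2 : ℝ) * (Real.exp (-(γ / 2 + 2 * γφ) * t) + Real.exp (-γ * t)) ∧
    fz = (1 / 2 : ℝ) * (Real.exp (-(γ / 2 + 2 * γφ) * t) + Real.exp (-γ * t)) ∧
    fy = Real.exp (-(γ / 2 + 2 * γφ) * t) ∧
    (1 / 4 : ℝ) * (Real.log fx - Real.log fy - Real.log fz) = γφ * t / 2 + γ * t / 8 ∧
    (1 / 4 : ℝ) * (-Real.log fx - Real.log fy + Real.log fz) = γφ * t / 2 + γ * t / 8 ∧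
    (1 / 4 : ℝ) * (-Real.log fx + Real.log fy - Real.log fz)
      = γ * t / 4 - (1 / 2 : ℝ) * Real.log (Real.cosh (γφ * t - γ * t / 4)) :=
  hadamard_dephasing_and_relaxation_general γφ γ t D hD fx fy fz hfx hfy hfz
end
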